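/- For each n ≥ 1, over the proposition letters {p₁,…,p_n, s, q₁,…,q_n}, let φ_n = ◇s ∧ ⋀_{i=1..n}((p_i → □(s → p_i)) ∧ (¬p_i → □(s → ¬p_i))) and ψ_n = (⋀_{i=1..n}((p_i → □q_i) ∧ (¬p_i → □¬q_i))) → ◇⋀_{i=1..n}(p_i ↔ q_i). Then φ_n → ψ_n is valid, and every Craig interpolant θ for φ_n → ψ_n (i.e., every modal formula θ with ⊨ φ_n → θ, ⊨ θ → ψ_n, and sig(θ) ⊆ sig(φ_n) ∩ sig(ψ_n)) has at least 2^n distinct subformulas (DAG-size ≥ 2^n). -/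

import Mathlib

inductive ModalFormula (α : Type) : Type
  | atom : α → ModalFormula α
  | top  : ModalFormula α
  | bot  : ModalFormula α
  | neg  : ModalFormula α → ModalFormula α
  | or   : ModalFormula α → ModalFormula α → ModalFormula α
  | and  : ModalFormula α → ModalFormula α → ModalFormula α
  | dia  : ModalFormula α → ModalFormula α
  | box  : ModalFormula α → ModalFormula α
  deriving DecidableEq

structure KripkeModel (α : Type) where
  World : Type
  R : World → World → Prop
  V : α → Set World

def Satisfies {α : Type} (M : KripkeModel α) : M.World → ModalFormula α → Prop
  | w, .atom p  => w ∈ M.V p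
  | _, .top     => True
  | _, .bot     => False
  | w, .neg φ   => ¬ Satisfies M w φ
  | w, .or φ ψ  => Satisfies M w φ ∨ Satisfies M w ψ
  | w, .and φ ψ => Satisfies M w φ ∧ Satisfies M w ψ
  | w, .dia φ   => ∃ v, M.R w v ∧ Satisfies M v φ
  | w, .box φ   => ∀ v, M.R w v → Satisfies M v φ

def Valid {α : Type} (φ : ModalFormula α) : Prop :=
  ∀ (M : KripkeModel α) (w : M.World), Satisfies M w φ

def ModalFormula.impl {α : Type} (φ ψ : ModalFormula α) : ModalFormula α :=
  .or (.neg φ) ψ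

def sig {α : Type} : ModalFormula α → Set α
  | .atom p  => {p}
  | .top     => ∅
  | .bot     => ∅
  | .neg φ   => sig φ
  | .or φ ψ  => sig φ ∪ sig ψ
  | .and φ ψ => sig φ ∪ sig ψ
  | .dia φ   => sig φ
  | .box φ   => sig φ

def IsBisimulation {α : Type} (τ : Set α) (M M' : KripkeModel α)
    (Z : M.World → M'.World → Prop) : Prop :=
  ∀ w w', Z w w' →
    (∀ p ∈ τ, (w ∈ M.V p ↔ w' ∈ M'.V p)) ∧
    (∀ v, M.R w v → ∃ v', M'.R w' v' ∧ Z v v') ∧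
    (∀ v', M'.R w' v' → ∃ v, M.R w v ∧ Z v v')

def Bisimilar {α : Type} (τ : Set α) (M : KripkeModel α) (w : M.World)
    (M' : KripkeModel α) (w' : M'.World) : Prop :=
  ∃ Z, IsBisimulation τ M M' Z ∧ Z w w'

/-- The proposition letters p₁,…,p_n, s, q₁,…,q_n (indexed from 0). -/
inductive Atom : Type
  | p : ℕ → Atom
  | s : Atom
  | q : ℕ → Atom
  deriving DecidableEq

/-- Conjunction of a list of formulas. -/
def bigAnd {α : Type} : List (ModalFormula α) → ModalFormula α
  | [] => .top
  | φ :: l => .and φ (bigAnd l)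

/-- Biconditional. -/
def iffF {α : Type} (φ ψ : ModalFormula α) : ModalFormula α :=
  .and (φ.impl ψ) (ψ.impl φ)

/-- `φ_n = ◇s ∧ ⋀_{i<n} ((p_i → □(s → p_i)) ∧ (¬p_i → □(s → ¬p_i)))`. -/
def phiN (n : ℕ) : ModalFormula Atom :=
  .and (.dia (.atom .s))
    (bigAnd ((List.range n).map fun i =>
      .and
        ((ModalFormula.atom (.p i)).impl
          (.box ((ModalFormula.atom .s).impl (.atom (.p i)))))
        ((ModalFormula.neg (.atom (.p i))).impl
          (.box ((ModalFormula.atom .s).impl (.neg (.atom (.p i))))))))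

/-- `ψ_n = (⋀_{i<n} ((p_i → □q_i) ∧ (¬p_i → □¬q_i))) → ◇⋀_{i<n} (p_i ↔ q_i)`. -/
def psiN (n : ℕ) : ModalFormula Atom :=
  (bigAnd ((List.range n).map fun i =>
      .and
        ((ModalFormula.atom (.p i)).impl (.box (.atom (.q i))))
        ((ModalFormula.neg (.atom (.p i))).impl (.box (.neg (.atom (.q i))))))).impl
    (.dia (bigAnd ((List.range n).map fun i =>
      iffF (.atom (.p i)) (.atom (.q i)))))

/-- The set of subformulas of a formula; its cardinality is the DAG-size. -/
def subFormulas {α : Type} [DecidableEq α] : ModalFormula α → Finset (ModalFormula α)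
  | .atom p  => {.atom p}
  | .top     => {.top}
  | .bot     => {.bot}
  | .neg φ   => insert (.neg φ) (subFormulas φ)
  | .or φ ψ  => insert (.or φ ψ) (subFormulas φ ∪ subFormulas ψ)
  | .and φ ψ => insert (.and φ ψ) (subFormulas φ ∪ subFormulas ψ)
  | .dia φ   => insert (.dia φ) (subFormulas φ)
  | .box φ   => insert (.box φ) (subFormulas φ)

/-!
For `a ⊆ {0, …, n-1}` and a set `B` of such sets, `countermodel a B` is the depth-one model
whose root carries the `p`-valuation `a` and whose successors carry the `p`-valuations `b ∈ B`,
with `s` true exactly at the successor `b = a` and `q i` true at every successor iff `i ∈ a`.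
There `φₙ` holds at the root as soon as `a ∈ B`, while `ψₙ` holds at the root iff `a ∈ B`. Hence
an interpolant `θ` is true at the root for `B` = all valuations and false for `B` = all
valuations but `a`.

At the root of such a model, the truth of `θ` depends only on which subformulas of `θ` hold at
some and at all successors, so some subformula `χₐ` of `θ` is true at exactly one successor, the
one for `a`, or false at exactly that one. As `θ` mentions only the `p i`, this is a property of
`χₐ` on the `2ⁿ` valuations alone, and for `n ≥ 2` no formula has it for two valuations: the
`χₐ` are pairwise distinct.
-/

section Semantics

variable {α : Type} {M : KripkeModel α} {w : M.World} {φ ψ : ModalFormula α}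

@[simp] lemma satisfies_neg : Satisfies M w (.neg φ) ↔ ¬Satisfies M w φ := Iff.rfl

@[simp] lemma satisfies_and :
    Satisfies M w (.and φ ψ) ↔ Satisfies M w φ ∧ Satisfies M w ψ := Iff.rfl

@[simp] lemma satisfies_impl :
    Satisfies M w (φ.impl ψ) ↔ (Satisfies M w φ → Satisfies M w ψ) := by
  simp only [ModalFormula.impl, Satisfies, imp_iff_not_or]

@[simp] lemma satisfies_iffF :
    Satisfies M w (iffF φ ψ) ↔ (Satisfies M w φ ↔ Satisfies M w ψ) := by
  simp only [iffF, Satisfies, satisfies_impl, iff_iff_implies_and_implies]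

@[simp] lemma satisfies_bigAnd {l : List (ModalFormula α)} :
    Satisfies M w (bigAnd l) ↔ ∀ φ ∈ l, Satisfies M w φ := by
  induction l with
  | nil => simp [bigAnd, Satisfies]
  | cons φ l ih => simp [bigAnd, ih]

lemma sig_bigAnd (l : List (ModalFormula α)) :
    sig (bigAnd l) = {x | ∃ φ ∈ l, x ∈ sig φ} := by
  induction l with
  | nil => simp [bigAnd, sig]
  | cons φ l ih => ext; simp [bigAnd, sig, ih]

end Semantics

section Subformulas

variable {α : Type} [DecidableEq α]

lemma mem_subFormulas_self (φ : ModalFormula α) : φ ∈ subFormulas φ := by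
  cases φ <;> simp [subFormulas]

lemma sig_subset_of_mem_subFormulas {φ ψ : ModalFormula α} (h : φ ∈ subFormulas ψ) :
    sig φ ⊆ sig ψ := by
  induction ψ with
  | atom | top | bot => simp_all [subFormulas]
  | neg ψ ih | dia ψ ih | box ψ ih =>
    simp only [subFormulas, Finset.mem_insert] at h
    rcases h with rfl | h
    · rfl
    · exact ih h
  | or ψ₁ ψ₂ ih₁ ih₂ | and ψ₁ ψ₂ ih₁ ih₂ =>
    simp only [subFormulas, Finset.mem_insert, Finset.mem_union] at h
    rcases h with rfl | h | h
    · rfl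
    · exact (ih₁ h).trans Set.subset_union_left
    · exact (ih₂ h).trans Set.subset_union_right

end Subformulas

abbrev deadEnd {α : Type} (c : Set α) : KripkeModel α where
  World := Unit
  R _ _ := False
  V x := {_w | x ∈ c}

abbrev fan {α ι : Type} (r : Set α) (val : ι → Set α) (B : Set ι) : KripkeModel α where
  World := Option ι
  R w v := w = none ∧ ∃ b ∈ B, v = some b
  V x := {w | x ∈ w.elim r val}

section Fan

variable {α ι : Type} {r : Set α} {val : ι → Set α} {B : Set ι}

@[simp] lemma satisfies_deadEnd_atom {c : Set α} {x : α} :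
    Satisfies (deadEnd c) () (.atom x) ↔ x ∈ c := Iff.rfl

lemma satisfies_deadEnd_congr {c c' : Set α} {φ : ModalFormula α}
    (h : ∀ x ∈ sig φ, x ∈ c ↔ x ∈ c') :
    Satisfies (deadEnd c) () φ ↔ Satisfies (deadEnd c') () φ := by
  induction φ with
  | atom x => exact h x rfl
  | top | bot | dia | box => simp [Satisfies, deadEnd]
  | neg φ ih => simp only [Satisfies, ih h]
  | or φ ψ ihφ ihψ | and φ ψ ihφ ihψ =>
    simp only [sig, Set.mem_union] at h
    simp only [Satisfies, ihφ fun x hx => h x (.inl hx), ihψ fun x hx => h x (.inr hx)]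

@[simp] lemma satisfies_fan_none_atom {x : α} :
    Satisfies (fan r val B) none (.atom x) ↔ x ∈ r := Iff.rfl

lemma satisfies_fan_some (b : ι) (φ : ModalFormula α) :
    Satisfies (fan r val B) (some b) φ ↔ Satisfies (deadEnd (val b)) () φ := by
  induction φ with
  | atom | top | bot => rfl
  | dia | box => simp [Satisfies, fan, deadEnd]
  | neg φ ih => simp only [Satisfies, ih]
  | or φ ψ ihφ ihψ | and φ ψ ihφ ihψ => simp only [Satisfies, ihφ, ihψ]

@[simp] lemma satisfies_fan_none_dia (φ : ModalFormula α) :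
    Satisfies (fan r val B) none (.dia φ) ↔ ∃ b ∈ B, Satisfies (deadEnd (val b)) () φ := by
  constructor
  · rintro ⟨_, ⟨-, b, hb, rfl⟩, hφ⟩
    exact ⟨b, hb, (satisfies_fan_some b φ).1 hφ⟩
  · rintro ⟨b, hb, hφ⟩
    exact ⟨some b, ⟨rfl, b, hb, rfl⟩, (satisfies_fan_some b φ).2 hφ⟩

@[simp] lemma satisfies_fan_none_box (φ : ModalFormula α) :
    Satisfies (fan r val B) none (.box φ) ↔ ∀ b ∈ B, Satisfies (deadEnd (val b)) () φ := by
  constructor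
  · exact fun h b hb => (satisfies_fan_some b φ).1 (h (some b) ⟨rfl, b, hb, rfl⟩)
  · rintro h _ ⟨-, b, hb, rfl⟩
    exact (satisfies_fan_some b φ).2 (h b hb)

variable [DecidableEq α]

lemma satisfies_fan_none_congr {B' : Set ι} {φ : ModalFormula α}
    (h : ∀ ψ ∈ subFormulas φ,
      ((∃ b ∈ B, Satisfies (deadEnd (val b)) () ψ) ↔
        ∃ b ∈ B', Satisfies (deadEnd (val b)) () ψ) ∧
      ((∀ b ∈ B, Satisfies (deadEnd (val b)) () ψ) ↔
        ∀ b ∈ B', Satisfies (deadEnd (val b)) () ψ)) :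
    Satisfies (fan r val B) none φ ↔ Satisfies (fan r val B') none φ := by
  induction φ with
  | atom | top | bot => rfl
  | neg φ ih => simp only [satisfies_neg, ih fun ψ hψ => h ψ (by simp [subFormulas, hψ])]
  | or φ₁ φ₂ ih₁ ih₂ | and φ₁ φ₂ ih₁ ih₂ =>
    simp only [Satisfies, ih₁ fun ψ hψ => h ψ (by simp [subFormulas, hψ]),
      ih₂ fun ψ hψ => h ψ (by simp [subFormulas, hψ])]
  | dia φ =>
    simp only [satisfies_fan_none_dia, (h φ (by simp [subFormulas, mem_subFormulas_self])).1]
  | box φ =>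
    simp only [satisfies_fan_none_box, (h φ (by simp [subFormulas, mem_subFormulas_self])).2]

lemma one_lt_card_subFormulas_of_fan {B' : Set ι} {φ : ModalFormula α}
    (h : ¬(Satisfies (fan r val B) none φ ↔ Satisfies (fan r val B') none φ)) :
    1 < (subFormulas φ).card := by
  refine Finset.one_lt_card.2 ⟨φ, mem_subFormulas_self φ, ?_⟩
  cases φ with
  | atom | top | bot => exact absurd Iff.rfl h
  | neg ψ | dia ψ | box ψ | or ψ _ | and ψ _ =>
    refine ⟨ψ, by simp [subFormulas, mem_subFormulas_self], fun h => ?_⟩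
    simpa +arith using congrArg sizeOf h

end Fan

def Isolates {β : Type} (V : Set β) (f : β → Prop) (a : β) : Prop :=
  ∀ b ∈ V, b ≠ a → (f b ↔ ¬f a)

section Isolates

variable {β : Type} [DecidableEq β] {V : Finset β}

lemma Isolates.of_not_iff {f : β → Prop} {a : β}
    (h : ¬((∃ b ∈ V, f b) ↔ ∃ b ∈ V.erase a, f b) ∨
      ¬((∀ b ∈ V, f b) ↔ ∀ b ∈ V.erase a, f b)) :
    Isolates V f a := by
  intro b hb hba
  simp only [Finset.mem_erase] at h
  grind

lemma Isolates.card_le {X : Type} (hV : 2 < V.card) {S : Finset X} {P : X → β → Prop}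
    (h : ∀ a ∈ V, ∃ x ∈ S, Isolates V (P x) a) : V.card ≤ S.card := by
  obtain ⟨a₀, ha₀⟩ : V.Nonempty := Finset.card_pos.1 (by omega)
  have : Nonempty X := ⟨(h a₀ ha₀).choose⟩
  choose! W hWS hWiso using h
  refine Finset.card_le_card_of_injOn W hWS fun a ha a' ha' hW => ?_
  by_contra hne
  -- At a third point `c`, isolating `a` and isolating `a'` prescribe opposite values of `P (W a)`.
  obtain ⟨c, hc⟩ : ((V.erase a).erase a').Nonempty := by
    rw [← Finset.card_pos]
    have := Finset.pred_card_le_card_erase (s := V) (a := a)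
    have := Finset.pred_card_le_card_erase (s := V.erase a) (a := a')
    omega
  simp only [Finset.mem_erase] at hc
  have ha'_of_a := hWiso a ha a' ha' (Ne.symm hne)
  have hc_of_a := hWiso a ha c hc.2.2 hc.2.1
  have hc_of_a' := hWiso a' ha' c hc.2.2 hc.1
  simp only [hW] at *
  tauto

lemma exists_isolates_of_fan {α : Type} [DecidableEq α] {r : Set α} {val : β → Set α}
    {a : β} {φ : ModalFormula α}
    (h : ¬(Satisfies (fan r val V) none φ ↔ Satisfies (fan r val (V.erase a)) none φ)) :
    ∃ ψ ∈ subFormulas φ, Isolates V (fun b => Satisfies (deadEnd (val b)) () ψ) a := by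
  by_contra! hψ
  refine h (satisfies_fan_none_congr fun ψ hψφ => ?_)
  by_contra hne
  exact hψ ψ hψφ (Isolates.of_not_iff (by simpa only [Finset.mem_coe, not_and_or] using hne))

end Isolates

theorem valid_phiN_impl_psiN (n : ℕ) : Valid ((phiN n).impl (psiN n)) := by
  intro M w
  simp only [phiN, psiN, Satisfies, satisfies_impl, satisfies_iffF, satisfies_bigAnd,
    List.forall_mem_map, List.mem_range]
  rintro ⟨⟨v, hwv, hs⟩, hφ⟩ hψ
  refine ⟨v, hwv, fun i hi => ?_⟩
  obtain ⟨hp, hnp⟩ := hφ i hi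
  obtain ⟨hq, hnq⟩ := hψ i hi
  by_cases hpw : w ∈ M.V (.p i)
  · exact iff_of_true (hp hpw v hwv hs) (hq hpw v hwv)
  · exact iff_of_false (hnp hpw v hwv hs) (hnq hpw v hwv)

lemma exists_eq_p_of_sig_subset {n : ℕ} {φ : ModalFormula Atom}
    (h : sig φ ⊆ sig (phiN n) ∩ sig (psiN n)) : ∀ x ∈ sig φ, ∃ i, x = .p i := by
  intro x hx
  obtain ⟨hφ, hψ⟩ := h hx
  cases x with
  | p i => exact ⟨i, rfl⟩
  | s => simp [psiN, sig, sig_bigAnd, ModalFormula.impl, iffF] at hψ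
  | q i => simp [phiN, sig, sig_bigAnd, ModalFormula.impl] at hφ

def pVal (a : Finset ℕ) : Set Atom :=
  {x | match x with
    | .p i => i ∈ a
    | _ => False}

def succVal (a b : Finset ℕ) : Set Atom :=
  {x | match x with
    | .p i => i ∈ b
    | .s => b = a
    | .q i => i ∈ a}

abbrev countermodel (a : Finset ℕ) (B : Set (Finset ℕ)) : KripkeModel Atom :=
  fan (pVal a) (succVal a) B

lemma satisfies_phiN_countermodel (n : ℕ) {a : Finset ℕ} {B : Set (Finset ℕ)} (ha : a ∈ B) :
    Satisfies (countermodel a B) none (phiN n) := by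
  simp +contextual [phiN, pVal, succVal, ha]

lemma satisfies_psiN_countermodel_iff {n : ℕ} {a : Finset ℕ} {B : Finset (Finset ℕ)}
    (ha : a ⊆ Finset.range n) (hB : ∀ b ∈ B, b ⊆ Finset.range n) :
    Satisfies (countermodel a B) none (psiN n) ↔ a ∈ B := by
  have hψ : Satisfies (countermodel a B) none (psiN n) ↔
      ∃ b ∈ B, ∀ i < n, (i ∈ b ↔ i ∈ a) := by
    simp +contextual [psiN, pVal, succVal]
  refine hψ.trans ⟨fun ⟨b, hb, hba⟩ => ?_, fun h => ⟨a, h, fun _ _ => Iff.rfl⟩⟩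
  have hb' : b = a := by
    ext i
    by_cases hi : i < n
    · exact hba i hi
    · exact iff_of_false (fun h => hi (Finset.mem_range.1 (hB b hb h)))
        (fun h => hi (Finset.mem_range.1 (ha h)))
  exact hb' ▸ hb

lemma satisfies_deadEnd_succVal_iff {φ : ModalFormula Atom}
    (hφ : ∀ x ∈ sig φ, ∃ i, x = .p i) (a b : Finset ℕ) :
    Satisfies (deadEnd (succVal a b)) () φ ↔ Satisfies (deadEnd (pVal b)) () φ :=
  satisfies_deadEnd_congr fun x hx => by
    obtain ⟨i, rfl⟩ := hφ x hx
    rfl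

section Interpolant

variable {n : ℕ} {θ : ModalFormula Atom} {a : Finset ℕ}

lemma not_iff_satisfies_countermodel_of_interpolant (hφθ : Valid ((phiN n).impl θ))
    (hθψ : Valid (θ.impl (psiN n))) (ha : a ∈ (Finset.range n).powerset) :
    ¬(Satisfies (countermodel a (Finset.range n).powerset) none θ ↔
      Satisfies (countermodel a ((Finset.range n).powerset.erase a)) none θ) := by
  intro hiff
  have hθ := satisfies_impl.1 (hφθ (countermodel a (Finset.range n).powerset) none)
    (satisfies_phiN_countermodel n (Finset.mem_coe.2 ha))
  have hψ := satisfies_impl.1 (hθψ (countermodel a ((Finset.range n).powerset.erase a)) none)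
    (hiff.1 hθ)
  rw [satisfies_psiN_countermodel_iff (Finset.mem_powerset.1 ha)
    fun b hb => Finset.mem_powerset.1 (Finset.mem_of_mem_erase hb)] at hψ
  exact Finset.notMem_erase a _ hψ

lemma exists_subFormula_isolates_of_interpolant (hφθ : Valid ((phiN n).impl θ))
    (hθψ : Valid (θ.impl (psiN n))) (hsig : sig θ ⊆ sig (phiN n) ∩ sig (psiN n))
    (ha : a ∈ (Finset.range n).powerset) :
    ∃ χ ∈ subFormulas θ,
      Isolates (Finset.range n).powerset (fun b => Satisfies (deadEnd (pVal b)) () χ) a := by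
  obtain ⟨χ, hχ, hiso⟩ :=
    exists_isolates_of_fan (not_iff_satisfies_countermodel_of_interpolant hφθ hθψ ha)
  have hχsig := exists_eq_p_of_sig_subset ((sig_subset_of_mem_subFormulas hχ).trans hsig)
  exact ⟨χ, hχ, by simpa only [satisfies_deadEnd_succVal_iff hχsig] using hiso⟩

end Interpolant

theorem interpolant_lower_bound_general (n : ℕ) :
    Valid ((phiN n).impl (psiN n)) ∧
    ∀ θ : ModalFormula Atom,
      Valid ((phiN n).impl θ) → Valid (θ.impl (psiN n)) →
      sig θ ⊆ sig (phiN n) ∩ sig (psiN n) →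
      2 ^ n ≤ (subFormulas θ).card := by
  refine ⟨valid_phiN_impl_psiN n, fun θ hφθ hθψ hsig => ?_⟩
  rcases le_or_gt n 1 with hn | hn
  · calc 2 ^ n ≤ 2 ^ 1 := Nat.pow_le_pow_right two_pos hn
      _ ≤ (subFormulas θ).card := one_lt_card_subFormulas_of_fan
        (not_iff_satisfies_countermodel_of_interpolant hφθ hθψ (Finset.empty_mem_powerset _))
  have hcard : ((Finset.range n).powerset).card = 2 ^ n := by simp
  calc 2 ^ n = ((Finset.range n).powerset).card := hcard.symm
    _ ≤ (subFormulas θ).card :=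
      Isolates.card_le (hcard ▸ Nat.lt_of_le_of_lt hn Nat.lt_two_pow_self)
        fun a ha => exists_subFormula_isolates_of_interpolant hφθ hθψ hsig ha

/-- Lower bound on interpolant size: `φ_n → ψ_n` is valid, and every Craig
interpolant for it has DAG-size at least `2^n`. -/
theorem interpolant_lower_bound (n : ℕ) (hn : 1 ≤ n) :
    Valid ((phiN n).impl (psiN n)) ∧
    ∀ θ : ModalFormula Atom,
      Valid ((phiN n).impl θ) → Valid (θ.impl (psiN n)) →
      sig θ ⊆ sig (phiN n) ∩ sig (psiN n) →
      2 ^ n ≤ (subFormulas θ).card :=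
  interpolant_lower_bound_general n
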